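/- arXiv:1607.04010 — 6 statements merged into one kernel-verified Lean document; each statement's English description precedes it below -/
import Mathlib

section
/- Let G be an acyclic graph (symmetric irreflexive relation with no injective cycle of length at least 3) on a set X, H an acyclic graph on a set Y, and h : X → Y an injective map such that (h(x), h(y)) ∈ H whenever (x, y) ∈ G. If G is connected (any two points of X are joined by a G-path), then for all x, y ∈ X, (x, y) ∈ G if and only if (h(x), h(y)) ∈ H; i.e., h is an isomorphism of graphs onto its image. -/
/-- A symmetric relation `S` is acyclic if there is no injective sequence
`(x_i)_{i ≤ n}` with `n ≥ 2`, consecutive points `S`-related, and `(x_n, x_0) ∈ S`. -/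
def Acyclic {X : Type*} (S : Set (X × X)) : Prop :=
  ¬ ∃ (n : ℕ) (x : Fin (n + 1) → X), 2 ≤ n ∧ Function.Injective x ∧
      (∀ i : Fin n, (x i.castSucc, x i.succ) ∈ S) ∧ (x (Fin.last n), x 0) ∈ S

/-- A relation `G` is connected if any two points are joined by a `G`-path. -/
def Connected {X : Type*} (G : Set (X × X)) : Prop :=
  ∀ x y : X, ∃ (n : ℕ) (p : Fin (n + 1) → X), p 0 = x ∧ p (Fin.last n) = y ∧
    ∀ i : Fin n, (p i.castSucc, p i.succ) ∈ G

/-! Join `x` and `y` by a path in `G`. Its image under the injective homomorphism `h` is a path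
from `h x` to `h y` in `H`; if `h x` and `h y` are adjacent, uniqueness of paths in the acyclic
graph `H` forces this image to be the edge between them, so the path in `G` has length one. -/

namespace SimpleGraph

theorem Preconnected.adj_of_adj_of_isAcyclic {V W : Type*} {G : SimpleGraph V} {G' : SimpleGraph W}
    (hG : G.Preconnected) (hG' : G'.IsAcyclic) (f : G →g G') (hf : Function.Injective f)
    {x y : V} (hxy : G'.Adj (f x) (f y)) : G.Adj x y := by
  classical
  let p : G.Path x y := (hG x y).some.toPath
  have hp : Path.map f hf p = ⟨hxy.toWalk, hxy.isPath_toWalk⟩ :=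
    (hG'.subsingleton_path _ _).elim _ _
  apply Walk.adj_of_length_eq_one (p := p.1)
  simpa using congrArg (fun q : G'.Path (f x) (f y) => q.1.length) hp

end SimpleGraph

section

variable {X : Type*}

def toSimpleGraph (S : Set (X × X)) (hsymm : ∀ x y, (x, y) ∈ S → (y, x) ∈ S)
    (hirrefl : ∀ x, (x, x) ∉ S) : SimpleGraph X where
  Adj a b := (a, b) ∈ S
  symm := ⟨hsymm⟩
  loopless := ⟨hirrefl⟩

theorem Connected.preconnected_toSimpleGraph {S : Set (X × X)} (hS : Connected S)
    (hsymm : ∀ x y, (x, y) ∈ S → (y, x) ∈ S) (hirrefl : ∀ x, (x, x) ∉ S) :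
    (toSimpleGraph S hsymm hirrefl).Preconnected := by
  intro x y
  obtain ⟨n, p, rfl, rfl, hp⟩ := hS x y
  suffices ∀ i, (toSimpleGraph S hsymm hirrefl).Reachable (p 0) (p i) from this _
  intro i
  induction i using Fin.induction with
  | zero => rfl
  | succ i ih => exact ih.trans (SimpleGraph.Adj.reachable (hp i))

theorem Acyclic.isAcyclic_toSimpleGraph {S : Set (X × X)} (hS : Acyclic S)
    (hsymm : ∀ x y, (x, y) ∈ S → (y, x) ∈ S) (hirrefl : ∀ x, (x, x) ∉ S) :
    (toSimpleGraph S hsymm hirrefl).IsAcyclic := by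
  intro v c hc
  have hlen := hc.three_le_length
  -- a cycle of length `n + 1` is closed up by its first `n + 1` vertices
  refine hS ⟨c.length - 1, fun i => c.getVert i, by omega, ?_, ?_, ?_⟩
  · intro i j hij
    exact Fin.ext (hc.getVert_injOn' (Nat.lt_succ_iff.mp i.isLt) (Nat.lt_succ_iff.mp j.isLt) hij)
  · intro i
    exact c.adj_getVert_succ (by rw [Fin.val_castSucc]; omega)
  · have hclose := c.adj_getVert_succ (i := c.length - 1) (by omega)
    rw [Nat.sub_add_cancel (by omega), c.getVert_length] at hclose
    simp only [Fin.val_last, Fin.val_zero, c.getVert_zero]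
    exact hclose

end

theorem stmt0_general {X Y : Type*} (G : Set (X × X)) (H : Set (Y × Y))
    (hGsym : ∀ x y, (x, y) ∈ G → (y, x) ∈ G) (hGirr : ∀ x, (x, x) ∉ G)
    (hHsym : ∀ x y, (x, y) ∈ H → (y, x) ∈ H) (hHirr : ∀ y, (y, y) ∉ H)
    (hHac : Acyclic H)
    (h : X → Y) (hinj : Function.Injective h)
    (hhom : ∀ x y, (x, y) ∈ G → (h x, h y) ∈ H)
    (hconn : Connected G) :
    ∀ x y, (x, y) ∈ G ↔ (h x, h y) ∈ H := by
  intro x y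
  refine ⟨hhom x y, ?_⟩
  exact (hconn.preconnected_toSimpleGraph hGsym hGirr).adj_of_adj_of_isAcyclic
    (hHac.isAcyclic_toSimpleGraph hHsym hHirr) ⟨h, hhom _ _⟩ hinj

theorem stmt0 {X Y : Type*} (G : Set (X × X)) (H : Set (Y × Y))
    (hGsym : ∀ x y, (x, y) ∈ G → (y, x) ∈ G) (hGirr : ∀ x, (x, x) ∉ G)
    (hGac : Acyclic G)
    (hHsym : ∀ x y, (x, y) ∈ H → (y, x) ∈ H) (hHirr : ∀ y, (y, y) ∉ H)
    (hHac : Acyclic H)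
    (h : X → Y) (hinj : Function.Injective h)
    (hhom : ∀ x y, (x, y) ∈ G → (h x, h y) ∈ H)
    (hconn : Connected G) :
    ∀ x y, (x, y) ∈ G ↔ (h x, h y) ∈ H :=
  stmt0_general G H hGsym hGirr hHsym hHirr hHac h hinj hhom hconn
end

section
/- Let A be an antisymmetric binary relation on a set X whose symmetrization s(A) is acyclic. Define G_A on 2 × X by ((ε, z), (ε', z')) ∈ G_A iff (ε, ε') = (0, 1) and (z, z') ∈ A. Then s(G_A) is acyclic. -/
/-- The symmetrization `s(A) = A ∪ A⁻¹` of a relation. -/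
def symRel {X : Type*} (A : Set (X × X)) : Set (X × X) := A ∪ {p | (p.2, p.1) ∈ A}

/-- The bipartite relation `G_A` on `2 × X` induced by `A`. -/
def BipGraph {X : Type*} (A : Set (X × X)) : Set ((Bool × X) × (Bool × X)) :=
  {p | p.1.1 = false ∧ p.2.1 = true ∧ (p.1.2, p.2.2) ∈ A}

/-- The oriented pair realized by step `j` of a walk `u` with orientations `o`. -/
def opair {X : Type*} (u : ℕ → X) (o : ℕ → Bool) (j : ℕ) : X × X :=
  if o j = true then (u j, u (j+1)) else (u (j+1), u j)

lemma opair_mem_symRel {X : Type*} {A : Set (X × X)} {u : ℕ → X} {o : ℕ → Bool} {j : ℕ}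
    (h : opair u o j ∈ A) : (u j, u (j+1)) ∈ symRel A := by
  unfold opair at h
  split at h
  · exact Or.inl h
  · exact Or.inr h

lemma lemP {X : Type*} (A : Set (X × X))
    (hanti : ∀ x y, (x, y) ∈ A → (y, x) ∈ A → x = y)
    (hac : Acyclic (symRel A)) :
    ∀ k : ℕ, 2 ≤ k → ∀ (u : ℕ → X) (o : ℕ → Bool),
      (∀ j, j < k → opair u o j ∈ A) →
      (∀ i j, i < k → j < k → opair u o i = opair u o j → i = j) →
      u k = u 0 →
      (∀ j, j + 2 ≤ k → u j ≠ u (j + 2)) → False := by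
  intro k
  induction k using Nat.strong_induction_on with
  | _ k ih =>
    intro hk u o hstep hdist hclose hH1
    rcases eq_or_lt_of_le hk with hk2 | hk3
    · exact hH1 0 (by omega) (by rw [← hk2] at hclose; exact hclose.symm)
    by_cases hinj : ∀ i j : ℕ, i < k → j < k → u i = u j → i = j
    · -- injective closed walk: a genuine cycle in symRel A
      refine hac ⟨k - 1, fun i => u i.val, by omega, ?_, ?_, ?_⟩
      · intro i j hij
        exact Fin.eq_of_val_eq
          (hinj i.val j.val (by have := i.isLt; omega) (by have := j.isLt; omega) hij)
      · intro i
        have h := opair_mem_symRel (hstep i.val (by have := i.isLt; omega))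
        simpa using h
      · have h := opair_mem_symRel (hstep (k-1) (by omega))
        rw [show k - 1 + 1 = k from by omega, hclose] at h
        simpa using h
    · push_neg at hinj
      obtain ⟨a0, b0, ha0, hb0, heq0, hne0⟩ := hinj
      have key : ∀ a b : ℕ, a < b → b < k → u a = u b → False := by
        intro a b hab hbk heq
        rcases eq_or_lt_of_le (Nat.succ_le_of_lt hab) with hb1 | hb2
        · -- loop case : b = a + 1
          subst hb1
          -- heq : u a = u (a+1)
          set u' : ℕ → X := fun j => if j ≤ a then u j else u (j+1) with hu'
          set o' : ℕ → Bool := fun j => if j < a then o j else o (j+1) with ho'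
          have hu'le : ∀ j, j ≤ a → u' j = u j := by
            intro j hj; simp only [hu']; exact if_pos hj
          have hu'ge : ∀ j, a ≤ j → u' j = u (j+1) := by
            intro j hj
            rcases eq_or_lt_of_le hj with h | h
            · simp only [hu', ← h, if_pos (le_refl a)]; exact heq
            · simp only [hu']; exact if_neg (by omega)
          have hop : ∀ j, opair u' o' j = opair u o (if j < a then j else j + 1) := by
            intro j
            by_cases hj : j < a
            · rw [if_pos hj]
              unfold opair
              rw [show o' j = o j from if_pos hj, hu'le j (le_of_lt hj), hu'le (j+1) hj]
            · have hj' : a ≤ j := le_of_not_gt hj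
              rw [if_neg hj]
              unfold opair
              rw [show o' j = o (j+1) from if_neg hj, hu'ge j hj',
                hu'ge (j+1) (le_trans hj' (Nat.le_succ j))]
          refine ih (k-1) (by omega) (by omega) u' o' ?_ ?_ ?_ ?_
          · intro j hj
            rw [hop j]
            by_cases hja : j < a
            · rw [if_pos hja]; exact hstep j (by omega)
            · rw [if_neg hja]; exact hstep (j+1) (by omega)
          · intro i j hi hj hopij
            rw [hop i, hop j] at hopij
            have hfi : (if i < a then i else i + 1) < k := by split <;> omega
            have hfj : (if j < a then j else j + 1) < k := by split <;> omega
            have hthis := hdist _ _ hfi hfj hopij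
            by_cases hia : i < a <;> by_cases hja : j < a
            · rw [if_pos hia, if_pos hja] at hthis; omega
            · rw [if_pos hia, if_neg hja] at hthis; omega
            · rw [if_neg hia, if_pos hja] at hthis; omega
            · rw [if_neg hia, if_neg hja] at hthis; omega
          · rw [hu'ge (k-1) (by omega), hu'le 0 (Nat.zero_le a),
              show k - 1 + 1 = k from by omega]
            exact hclose
          · intro j hj2
            by_cases h1 : j + 2 ≤ a
            · rw [hu'le j (by omega), hu'le (j+2) h1]
              exact hH1 j (by omega)
            · by_cases h2 : a ≤ j
              · rw [hu'ge j h2, hu'ge (j+2) (by omega)]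
                exact hH1 (j+1) (by omega)
              · -- a = j + 1
                have haj : a = j + 1 := by omega
                rw [hu'le j (by omega), hu'ge (j+2) (by omega)]
                intro hequ'
                -- hequ' : u j = u (j+3)
                have hloop : u (j+1) = u (j+2) := by
                  have hx := heq
                  rw [haj] at hx
                  exact hx
                have e2 : u (j+2) = u (j+1) := hloop.symm
                have e3 : u (j+3) = u j := hequ'.symm
                have hsj := hstep j (by omega)
                have hsj2 := hstep (j+2) (by omega)
                cases hoj : o j <;> cases hoj2 : o (j + 2)
                · -- both false
                  simp only [opair, hoj, Bool.false_eq_true, if_neg, ite_false] at hsj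
                  simp only [opair, hoj2, Bool.false_eq_true, if_neg, ite_false] at hsj2
                  rw [show j + 2 + 1 = j + 3 from rfl, e3, e2] at hsj2
                  have hax := hanti _ _ hsj2 hsj
                  exact hH1 j (by omega) (hax.trans e2.symm)
                · -- o j = false, o (j+2) = true
                  have hpe : opair u o j = opair u o (j+2) := by
                    simp only [opair, hoj, hoj2, Bool.false_eq_true, ite_false, ite_true,
                      if_true, if_false]
                    rw [show j + 2 + 1 = j + 3 from rfl, e3, e2]
                  have := hdist j (j+2) (by omega) (by omega) hpe
                  omega
                · -- o j = true, o (j+2) = false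
                  have hpe : opair u o j = opair u o (j+2) := by
                    simp only [opair, hoj, hoj2, Bool.false_eq_true, ite_false, ite_true,
                      if_true, if_false]
                    rw [show j + 2 + 1 = j + 3 from rfl, e3, e2]
                  have := hdist j (j+2) (by omega) (by omega) hpe
                  omega
                · -- both true
                  simp only [opair, hoj, ite_true, if_true] at hsj
                  simp only [opair, hoj2, ite_true, if_true] at hsj2
                  rw [show j + 2 + 1 = j + 3 from rfl, e3, e2] at hsj2
                  have hax := hanti _ _ hsj hsj2
                  exact hH1 j (by omega) (hax.trans e2.symm)
        · -- split case : a + 2 ≤ b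
          refine ih (b - a) (by omega) (by omega) (fun j => u (a + j)) (fun j => o (a + j))
            ?_ ?_ ?_ ?_
          · intro j hj
            exact hstep (a + j) (by omega)
          · intro i j hi hj h
            have := hdist (a+i) (a+j) (by omega) (by omega) h
            omega
          · show u (a + (b - a)) = u (a + 0)
            rw [show a + (b - a) = b from by omega]
            exact heq.symm
          · intro j hj
            exact hH1 (a + j) (by omega)
      rcases lt_trichotomy a0 b0 with h | h | h
      · exact key a0 b0 h hb0 heq0
      · exact hne0 h
      · exact key b0 a0 h ha0 heq0.symm

theorem stmt2 {X : Type*} (A : Set (X × X))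
    (hanti : ∀ x y, (x, y) ∈ A → (y, x) ∈ A → x = y)
    (hac : Acyclic (symRel A)) :
    Acyclic (symRel (BipGraph A)) := by
  rintro ⟨n, y, hn, hyinj, hedge, hlast⟩
  have hm3 : 3 ≤ n + 1 := by omega
  have hmpos : 0 < n + 1 := by omega
  set v : ℕ → Bool × X := fun j => y ⟨j % (n+1), Nat.mod_lt j hmpos⟩ with hv
  have hvmod : ∀ i j, v i = v j → i % (n+1) = j % (n+1) := by
    intro i j h
    simp only [hv] at h
    have := hyinj h
    simpa using congrArg Fin.val this
  have hvsmall : ∀ j (hj : j < n + 1), v j = y ⟨j, hj⟩ := by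
    intro j hj
    simp only [hv]
    congr 1
    exact Fin.eq_of_val_eq (Nat.mod_eq_of_lt hj)
  have hE : ∀ j, j < n + 1 → (v j, v (j+1)) ∈ symRel (BipGraph A) := by
    intro j hj
    rcases eq_or_lt_of_le (Nat.succ_le_of_lt hj) with hj1 | hj2
    · -- j = n
      have h1 : v j = y (Fin.last n) := by
        rw [hvsmall j hj]
        congr 1
        exact Fin.eq_of_val_eq (by simp [Fin.last]; omega)
      have h2 : v (j+1) = y 0 := by
        have hval : (j + 1) % (n + 1) = 0 := by
          have hh : j + 1 = n + 1 := by omega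
          rw [hh, Nat.mod_self]
        simp only [hv]
        congr 1
        exact Fin.eq_of_val_eq (by simp [hval])
      rw [h1, h2]
      exact hlast
    · have hjn : j < n := by omega
      have h1 : v j = y ((⟨j, hjn⟩ : Fin n).castSucc) := by
        rw [hvsmall j hj]
        congr 1
      have h2 : v (j+1) = y ((⟨j, hjn⟩ : Fin n).succ) := by
        rw [hvsmall (j+1) hj2]
        congr 1
      rw [h1, h2]
      exact hedge ⟨j, hjn⟩
  set u : ℕ → X := fun j => (v j).2 with hu
  set o : ℕ → Bool := fun j => !(v j).1 with ho
  have hstruct : ∀ j, j < n + 1 →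
      (o j = true ∧ v j = (false, u j) ∧ v (j+1) = (true, u (j+1)) ∧ (u j, u (j+1)) ∈ A) ∨
      (o j = false ∧ v j = (true, u j) ∧ v (j+1) = (false, u (j+1)) ∧ (u (j+1), u j) ∈ A) := by
    intro j hj
    rcases hE j hj with h | h
    · obtain ⟨h1, h2, h3⟩ := h
      dsimp only at h1 h2 h3
      left
      refine ⟨by simp [ho, h1], ?_, ?_, h3⟩
      · rw [show ((false, u j) : Bool × X) = ((v j).1, (v j).2) from by rw [h1]]
      · rw [show ((true, u (j+1)) : Bool × X) = ((v (j+1)).1, (v (j+1)).2) from by rw [h2]]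
    · obtain ⟨h1, h2, h3⟩ := h
      dsimp only at h1 h2 h3
      right
      refine ⟨by simp [ho, h2], ?_, ?_, h3⟩
      · rw [show ((true, u j) : Bool × X) = ((v j).1, (v j).2) from by rw [h2]]
      · rw [show ((false, u (j+1)) : Bool × X) = ((v (j+1)).1, (v (j+1)).2) from by rw [h1]]
  have hstep : ∀ j, j < n + 1 → opair u o j ∈ A := by
    intro j hj
    rcases hstruct j hj with ⟨h1, _, _, h4⟩ | ⟨h1, _, _, h4⟩
    · simpa [opair, h1] using h4
    · simpa [opair, h1] using h4
  have modsucc : ∀ p q : ℕ, p < n + 1 → q + 1 ≤ n + 1 → p % (n+1) = (q+1) % (n+1) →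
      (p = q + 1 ∨ (q + 1 = n + 1 ∧ p = 0)) := by
    intro p q hp hq h
    rcases eq_or_lt_of_le hq with h1 | h1
    · right
      refine ⟨h1, ?_⟩
      rw [h1, Nat.mod_self, Nat.mod_eq_of_lt hp] at h
      exact h
    · left
      rw [Nat.mod_eq_of_lt hp, Nat.mod_eq_of_lt h1] at h
      exact h
  have hdist : ∀ i j, i < n + 1 → j < n + 1 → opair u o i = opair u o j → i = j := by
    intro i j hi hj hop
    rcases hstruct i hi with ⟨hi1, hi2, hi3, _⟩ | ⟨hi1, hi2, hi3, _⟩ <;>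
      rcases hstruct j hj with ⟨hj1, hj2, hj3, _⟩ | ⟨hj1, hj2, hj3, _⟩
    · simp only [opair, hi1, hj1, ite_true, if_true, Prod.mk.injEq] at hop
      have hvv : v i = v j := by rw [hi2, hj2, hop.1]
      have := hvmod i j hvv
      rwa [Nat.mod_eq_of_lt hi, Nat.mod_eq_of_lt hj] at this
    · simp only [opair, hi1, hj1, Bool.false_eq_true, ite_true, ite_false, if_true, if_false,
        Prod.mk.injEq] at hop
      have hvv1 : v i = v (j+1) := by rw [hi2, hj3, hop.1]
      have hvv2 : v (i+1) = v j := by rw [hi3, hj2, hop.2]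
      have e1 := modsucc i j hi (by omega) (hvmod i (j+1) hvv1)
      have e2 := modsucc j i hj (by omega) (hvmod (i+1) j hvv2).symm
      omega
    · simp only [opair, hi1, hj1, Bool.false_eq_true, ite_true, ite_false, if_true, if_false,
        Prod.mk.injEq] at hop
      have hvv1 : v (i+1) = v j := by rw [hi3, hj2, hop.1]
      have hvv2 : v i = v (j+1) := by rw [hi2, hj3, hop.2]
      have e1 := modsucc i j hi (by omega) (hvmod i (j+1) hvv2)
      have e2 := modsucc j i hj (by omega) (hvmod (i+1) j hvv1).symm
      omega
    · simp only [opair, hi1, hj1, Bool.false_eq_true, ite_false, if_false, Prod.mk.injEq] at hop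
      have hvv : v i = v j := by rw [hi2, hj2, hop.2]
      have := hvmod i j hvv
      rwa [Nat.mod_eq_of_lt hi, Nat.mod_eq_of_lt hj] at this
  have hclose : u (n+1) = u 0 := by
    have hvv : v (n+1) = v 0 := by
      simp only [hv]
      congr 1
      exact Fin.eq_of_val_eq (by simp [Nat.mod_self])
    simp only [hu]
    rw [hvv]
  have hH1 : ∀ j, j + 2 ≤ n + 1 → u j ≠ u (j + 2) := by
    intro j hj2 hequ
    have l1 := hstruct j (by omega)
    have l2 := hstruct (j+1) (by omega)
    have hlv : v j = v (j+2) := by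
      rcases l1 with ⟨_, hA, hB, _⟩ | ⟨_, hA, hB, _⟩ <;>
        rcases l2 with ⟨_, hC, hD, _⟩ | ⟨_, hC, hD, _⟩
      · rw [hB] at hC; simp at hC
      · rw [hA]
        rw [show j + 1 + 1 = j + 2 from rfl] at hD
        rw [hD, hequ]
      · rw [hA]
        rw [show j + 1 + 1 = j + 2 from rfl] at hD
        rw [hD, hequ]
      · rw [hB] at hC; simp at hC
    have hmm := hvmod j (j+2) hlv
    rw [Nat.mod_eq_of_lt (by omega : j < n + 1)] at hmm
    rcases eq_or_lt_of_le hj2 with h | h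
    · rw [h, Nat.mod_self] at hmm
      omega
    · rw [Nat.mod_eq_of_lt h] at hmm
      omega
  exact lemP A hanti hac (n+1) (by omega) u o hstep hdist hclose hH1
end

section
/- Define 𝔾₀ := {(s_n 0 γ, s_n 1 γ) : n ∈ ω, γ ∈ 2^ω} ⊆ 2^ω × 2^ω, where (s_n) is a dense sequence in 2^{<ω} with |s_n| = n. Then the closure of 𝔾₀ in 2^ω × 2^ω equals 𝔾₀ ∪ Δ(2^ω), where Δ(2^ω) is the diagonal. -/
/-- The point of Cantor space obtained by concatenating a finite sequence `u`
with an infinite sequence `γ`. -/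
def catSeq (u : List Bool) (γ : ℕ → Bool) : ℕ → Bool := fun k =>
  if h : k < u.length then u.get ⟨k, h⟩ else γ (k - u.length)

/-- The relation `𝔾₀` on Cantor space associated with the sequence `s`. -/
def G0 (s : ℕ → List Bool) : Set ((ℕ → Bool) × (ℕ → Bool)) :=
  {p | ∃ (n : ℕ) (γ : ℕ → Bool),
    p = (catSeq (s n ++ [false]) γ, catSeq (s n ++ [true]) γ)}

lemma catSeq_lt (u : List Bool) (b : Bool) (γ : ℕ → Bool) {i : ℕ} (h : i < u.length) :
    catSeq (u ++ [b]) γ i = u[i] := by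
  have h' : i < (u ++ [b]).length := by simp; omega
  simp only [catSeq, dif_pos h', List.get_eq_getElem]
  exact List.getElem_append_left h

lemma catSeq_at (u : List Bool) (b : Bool) (γ : ℕ → Bool) :
    catSeq (u ++ [b]) γ u.length = b := by
  have h' : u.length < (u ++ [b]).length := by simp
  simp [catSeq, dif_pos h']

lemma catSeq_gt (u : List Bool) (b : Bool) (γ : ℕ → Bool) {i : ℕ} (h : u.length < i) :
    catSeq (u ++ [b]) γ i = γ (i - (u.length + 1)) := by
  have h' : ¬ i < (u ++ [b]).length := by simp; omega
  simp only [catSeq, dif_neg h']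
  congr 1
  simp

lemma cyl_basis (x : ℕ → Bool) :
    (nhds x).HasBasis (fun _ : ℕ => True) (fun n => PiNat.cylinder x n) := by
  constructor
  intro t
  constructor
  · intro ht
    obtain ⟨v, ⟨y, n, rfl⟩, hx, hv⟩ :=
      (PiNat.isTopologicalBasis_cylinders (fun _ : ℕ => Bool)).mem_nhds_iff.1 ht
    exact ⟨n, trivial, by rwa [PiNat.mem_cylinder_iff_eq.1 hx]⟩
  · rintro ⟨n, -, hn⟩
    exact Filter.mem_of_superset
      ((PiNat.isOpen_cylinder _ x n).mem_nhds (PiNat.self_mem_cylinder x n)) hn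

lemma mem_closure_iff_cyl (S : Set ((ℕ → Bool) × (ℕ → Bool))) (x y : ℕ → Bool) :
    (x, y) ∈ closure S ↔ ∀ N, ∃ p ∈ S,
      (∀ i < N, p.1 i = x i) ∧ (∀ i < N, p.2 i = y i) := by
  rw [mem_closure_iff_nhds]
  constructor
  · intro h N
    have hU : PiNat.cylinder x N ×ˢ PiNat.cylinder y N ∈ nhds (x, y) := by
      rw [nhds_prod_eq]
      exact Filter.prod_mem_prod ((cyl_basis x).mem_of_mem trivial)
        ((cyl_basis y).mem_of_mem trivial)
    obtain ⟨p, hp1, hp2⟩ := h _ hU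
    exact ⟨p, hp2, hp1.1, hp1.2⟩
  · intro h t ht
    rw [nhds_prod_eq] at ht
    obtain ⟨U, hU, V, hV, hUV⟩ := Filter.mem_prod_iff.1 ht
    obtain ⟨n, -, hn⟩ := (cyl_basis x).mem_iff.1 hU
    obtain ⟨m, -, hm⟩ := (cyl_basis y).mem_iff.1 hV
    obtain ⟨p, hpS, h1, h2⟩ := h (max n m)
    refine ⟨p, hUV ⟨hn ?_, hm ?_⟩, hpS⟩
    · exact fun i hi => h1 i (lt_of_lt_of_le hi (le_max_left n m))
    · exact fun i hi => h2 i (lt_of_lt_of_le hi (le_max_right n m))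

theorem stmt6 (s : ℕ → List Bool) (hlen : ∀ n, (s n).length = n)
    (hdense : ∀ t : List Bool, ∃ n, t <+: s n) :
    closure (G0 s) = G0 s ∪ Set.diagonal (ℕ → Bool) := by
  ext ⟨x, y⟩
  rw [mem_closure_iff_cyl]
  constructor
  · intro h
    by_cases hxy : x = y
    · exact Or.inr hxy
    · left
      have hex : ∃ k, x k ≠ y k := by
        by_contra hc
        push_neg at hc
        exact hxy (funext hc)
      set k := Nat.find hex with hkdef
      have hk : x k ≠ y k := Nat.find_spec hex
      have hmin : ∀ i < k, x i = y i := fun i hi => by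
        have := Nat.find_min hex hi; simpa using this
      -- extraction lemma: for N > k, the witness has index k
      have key : ∀ N, k < N → ∃ γ : ℕ → Bool,
          (∀ i < N, catSeq (s k ++ [false]) γ i = x i) ∧
          (∀ i < N, catSeq (s k ++ [true]) γ i = y i) := by
        intro N hN
        obtain ⟨p, ⟨m, γ, hp⟩, h1, h2⟩ := h N
        subst hp
        simp only at h1 h2
        have hm : m = k := by
          by_contra hmk
          apply hk
          rw [← h1 k hN, ← h2 k hN]
          have hkm : k ≠ (s m).length := by rw [hlen]; omega
          rcases lt_or_gt_of_ne hkm with hlt | hgt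
          · rw [catSeq_lt _ _ _ hlt, catSeq_lt _ _ _ hlt]
          · rw [catSeq_gt _ _ _ hgt, catSeq_gt _ _ _ hgt]
        subst hm
        exact ⟨γ, h1, h2⟩
      refine ⟨k, fun j => x (k + 1 + j), ?_⟩
      have hxk : x k = false ∧ y k = true := by
        obtain ⟨γ, h1, h2⟩ := key (k + 1) (Nat.lt_succ_self k)
        constructor
        · rw [← h1 k (Nat.lt_succ_self k)]
          have := catSeq_at (s k) false γ
          rw [hlen] at this; exact this
        · rw [← h2 k (Nat.lt_succ_self k)]
          have := catSeq_at (s k) true γ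
          rw [hlen] at this; exact this
      have hlow : ∀ i, ∀ h : i < k, x i = (s k)[i]'(by rw [hlen]; exact h) := by
        intro i hi
        obtain ⟨γ, h1, _⟩ := key (k + 1) (Nat.lt_succ_self k)
        rw [← h1 i (by omega)]
        exact catSeq_lt _ _ _ (by rw [hlen]; exact hi)
      have hhigh : ∀ i, k < i → y i = x i := by
        intro i hi
        obtain ⟨γ, h1, h2⟩ := key (i + 1) (by omega)
        have hgt : (s k).length < i := by rw [hlen]; omega
        rw [← h1 i (Nat.lt_succ_self i), ← h2 i (Nat.lt_succ_self i),
          catSeq_gt _ _ _ hgt, catSeq_gt _ _ _ hgt]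
      have hx : x = catSeq (s k ++ [false]) (fun j => x (k + 1 + j)) := by
        funext i
        rcases lt_trichotomy i k with hi | hi | hi
        · rw [catSeq_lt _ _ _ (by rw [hlen]; omega)]
          exact hlow i hi
        · rw [hi]
          have := catSeq_at (s k) false (fun j => x (k + 1 + j))
          rw [hlen] at this; rw [this, hxk.1]
        · rw [catSeq_gt _ _ _ (by rw [hlen]; omega)]
          simp only [hlen]
          congr 1
          omega
      have hy : y = catSeq (s k ++ [true]) (fun j => x (k + 1 + j)) := by
        funext i
        rcases lt_trichotomy i k with hi | hi | hi
        · rw [catSeq_lt _ _ _ (by rw [hlen]; omega), ← hlow i hi]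
          exact (hmin i hi).symm
        · rw [hi]
          have := catSeq_at (s k) true (fun j => x (k + 1 + j))
          rw [hlen] at this; rw [this, hxk.2]
        · rw [catSeq_gt _ _ _ (by rw [hlen]; omega), hhigh i hi]
          simp only [hlen]
          congr 1
          omega
      exact Prod.ext hx hy
  · rintro (hp | hp)
    · exact fun N => ⟨(x, y), hp, fun i _ => rfl, fun i _ => rfl⟩
    · have hxy : x = y := hp
      subst hxy
      intro N
      obtain ⟨n, hn⟩ := hdense (List.ofFn fun i : Fin N => x i)
      have hNn : N ≤ n := by
        have := hn.length_le
        simpa [hlen] using this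
      refine ⟨(catSeq (s n ++ [false]) (fun _ => false),
        catSeq (s n ++ [true]) (fun _ => false)), ⟨n, _, rfl⟩, ?_, ?_⟩ <;>
      · intro i hi
        dsimp only
        rw [catSeq_lt _ _ _ (by rw [hlen]; omega)]
        have h1 : (s n)[i]'(by rw [hlen]; omega) =
            (List.ofFn fun j : Fin N => x j)[i]'(by simpa using hi) :=
          (hn.getElem (by simpa using hi)).symm
        rw [h1]
        simp
end

section
/- For each l ≥ 1, let 𝒯_l := {(s, t) ∈ 2^l × 2^l : s ≠ t and (N_s × N_t) ∩ 𝔾₀ ≠ ∅}, where 𝔾₀ := {(s_n 0 γ, s_n 1 γ) : n ∈ ω, γ ∈ 2^ω}. Then s(𝒯_l) is a connected acyclic graph on 2^l. -/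
/-- The basic clopen set `N_u` of extensions of the finite sequence `u : 2^l`. -/
def NBasic {l : ℕ} (u : Fin l → Bool) : Set (ℕ → Bool) := {α | ∀ i : Fin l, α i = u i}

/-- The `l`-th level `𝒯_l` of the tree associated with `𝔾₀`. -/
def Tlevel (s : ℕ → List Bool) (l : ℕ) : Set ((Fin l → Bool) × (Fin l → Bool)) :=
  {q | q.1 ≠ q.2 ∧ ∃ p ∈ G0 s, p.1 ∈ NBasic q.1 ∧ p.2 ∈ NBasic q.2}

/-!
An edge of `s(𝒯_l)` at coordinate `n` flips bit `n` of a vertex whose first `n` bits spell `s n`.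
Connectedness: by induction on `m`, two vertices agreeing from coordinate `m + 1` on are joined,
since each can first be moved to have prefix `s m`, after which they are equal or joined by the
flip at `m`. Acyclicity: in a cycle let `m` be the largest flipped coordinate. Bits above
`m` never change and both ends of an `m`-flip have prefix `s m`, so all `m`-flips of the cycle
run along a single edge, which an injective cycle of length at least 3 uses only once. Then bit
`m` changes exactly once around the cycle, which is absurd.
-/

open Function

section catSeq

variable (u : List Bool) (γ : ℕ → Bool)

lemma catSeq_of_lt {k : ℕ} (h : k < u.length) : catSeq u γ k = u.getD k false := by
  simp [catSeq, h]

lemma catSeq_append_singleton (b b' : Bool) :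
    catSeq (u ++ [b]) γ = update (catSeq (u ++ [b']) γ) u.length b := by
  funext k
  rcases lt_trichotomy k u.length with h | rfl | h
  · simp [catSeq, update_of_ne h.ne, h, Nat.lt_succ_of_lt h, List.getElem_append_left]
  · simp [catSeq]
  · simp [catSeq, update_of_ne h.ne', Nat.not_le_of_gt h]

lemma catSeq_drop {α : ℕ → Bool} (h : ∀ k < u.length, α k = u.getD k false) :
    catSeq u (fun j => α (j + u.length)) = α := by
  funext k
  by_cases hk : k < u.length
  · rw [catSeq_of_lt _ _ hk, h k hk]
  · simp [catSeq, hk, Nat.sub_add_cancel (Nat.le_of_not_lt hk)]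

end catSeq

variable {s : ℕ → List Bool}

lemma mem_G0_iff (hlen : ∀ n, (s n).length = n) {α β : ℕ → Bool} :
    (α, β) ∈ G0 s ↔
      ∃ n, (∀ k < n, α k = (s n).getD k false) ∧ α n = false ∧ β = update α n true := by
  have hlen' : ∀ n b, (s n ++ [b]).length = n + 1 := by simp [hlen]
  constructor
  · rintro ⟨n, γ, hαβ⟩
    simp only [Prod.mk.injEq] at hαβ
    obtain ⟨rfl, rfl⟩ := hαβ
    refine ⟨n, fun k hk => ?_, ?_, ?_⟩
    · rw [catSeq_of_lt _ _ (by rw [hlen']; omega), List.getD_append _ _ _ _ (by rw [hlen]; omega)]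
    · rw [catSeq_of_lt _ _ (by rw [hlen']; omega), List.getD_append_right _ _ _ _ (by rw [hlen])]
      simp [hlen]
    · rw [catSeq_append_singleton _ _ true false, hlen]
  · rintro ⟨n, hpre, hn, rfl⟩
    have hα : catSeq (s n ++ [false]) (fun j => α (j + (n + 1))) = α := by
      rw [← hlen' n false]
      refine catSeq_drop _ fun k hk => ?_
      rcases Nat.lt_succ_iff_lt_or_eq.mp (hlen' n false ▸ hk) with hk | rfl
      · rw [hpre k hk, List.getD_append _ _ _ _ (by rw [hlen]; omega)]
      · rw [hn, List.getD_append_right _ _ _ _ (by rw [hlen])]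
        simp [hlen]
    refine ⟨n, fun j => α (j + (n + 1)), ?_⟩
    rw [catSeq_append_singleton _ _ true false, hα, hlen]

lemma mem_Tlevel_iff (hlen : ∀ n, (s n).length = n) {l : ℕ} {u v : Fin l → Bool} :
    (u, v) ∈ Tlevel s l ↔
      ∃ n : Fin l, (∀ i < n, u i = (s n).getD i false) ∧ u n = false ∧ v = update u n true := by
  constructor
  · rintro ⟨huv, ⟨α, β⟩, hG, hu, hv⟩
    obtain ⟨n, hpre, hn, rfl⟩ := (mem_G0_iff hlen).1 hG
    simp only [NBasic, Set.mem_ofPred_eq] at hu hv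
    by_cases hnl : n < l
    · refine ⟨⟨n, hnl⟩, fun i hi => (hu i).symm.trans (hpre i hi), (hu _).symm.trans hn, ?_⟩
      funext i
      simp [← hv i, update_apply, Fin.ext_iff, hu]
    · refine absurd (funext fun i => ?_) huv
      change u i = v i
      rw [← hu i, ← hv i, update_of_ne (by omega)]
  · rintro ⟨n, hpre, hn, rfl⟩
    set α : ℕ → Bool := fun k => if h : k < l then u ⟨k, h⟩ else false
    have hα : ∀ i : Fin l, α i = u i := fun i => by simp [α]
    refine ⟨fun h => by simpa [hn] using congrFun h n, (α, update α n true),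
      (mem_G0_iff hlen).2 ⟨n, fun k hk => ?_, by rw [hα, hn], rfl⟩, hα, fun i => ?_⟩
    · rw [show k = (⟨k, hk.trans n.isLt⟩ : Fin l) from rfl, hα]
      exact hpre _ hk
    · simp [update_apply, Fin.ext_iff, hα]

lemma mem_symRel_Tlevel_iff (hlen : ∀ n, (s n).length = n) {l : ℕ} {u v : Fin l → Bool} :
    (u, v) ∈ symRel (Tlevel s l) ↔
      ∃ n : Fin l, (∀ i < n, u i = (s n).getD i false) ∧ v = update u n (!u n) := by
  simp only [symRel, Set.mem_union, Set.mem_ofPred_eq, mem_Tlevel_iff hlen]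
  constructor
  · rintro (⟨n, hpre, hn, rfl⟩ | ⟨n, hpre, hn, rfl⟩)
    · exact ⟨n, hpre, by rw [hn]; rfl⟩
    · refine ⟨n, fun i hi => by rw [update_of_ne hi.ne, hpre i hi], ?_⟩
      simp [← hn]
  · rintro ⟨n, hpre, rfl⟩
    cases hn : u n
    · exact Or.inl ⟨n, hpre, hn, rfl⟩
    · refine Or.inr ⟨n, fun i hi => by rw [update_of_ne hi.ne, hpre i hi], by simp, ?_⟩
      simp [← hn]

lemma connected_of_reflTransGen {X : Type*} {G : Set (X × X)}
    (h : ∀ x y, Relation.ReflTransGen (fun a b => (a, b) ∈ G) x y) : Connected G := by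
  intro x y
  induction h x y with
  | refl => exact ⟨0, fun _ => x, rfl, rfl, fun i => i.elim0⟩
  | @tail b c _ hbc ih =>
    obtain ⟨n, p, hp0, hpn, hp⟩ := ih
    refine ⟨n + 1, Fin.snoc p c, by simpa using hp0, by simp, Fin.lastCases ?_ fun j => ?_⟩
    · simpa [hpn] using hbc
    · simpa only [Fin.succ_castSucc, Fin.snoc_castSucc] using hp j

section flip

variable {l : ℕ} {R : (Fin l → Bool) → (Fin l → Bool) → Prop}
  (hR : ∀ u (n : Fin l), (∀ i < n, u i = (s n).getD i false) → R u (update u n (!u n)))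
include hR

lemma reflTransGen_of_forall_le_eq (m : ℕ) {u v : Fin l → Bool}
    (huv : ∀ i : Fin l, m ≤ i → u i = v i) :
    Relation.ReflTransGen R u v := by
  induction m generalizing u v with
  | zero => rw [funext fun i => huv i (Nat.zero_le _)]
  | succ m ih =>
    by_cases hml : m < l
    swap
    · exact ih fun i hi => absurd i.isLt (by omega)
    set n : Fin l := ⟨m, hml⟩
    have hflip : ∀ u, Relation.ReflTransGen R u (update u n (!u n)) := by
      intro u
      set w : Fin l → Bool := fun i => if i < n then (s n).getD i false else u i
      have hw : ∀ i, ¬ i < n → w i = u i := fun i hi => if_neg hi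
      refine .trans (ih fun i hi => (hw i (not_lt.2 hi)).symm)
        (.head (hR w n fun i hi => if_pos hi) ?_)
      refine ih fun i hi => ?_
      rcases eq_or_ne i n with rfl | hin
      · simp [hw]
      · simp [update_of_ne hin, hw i (not_lt.2 hi)]
    rcases Bool.eq_or_eq_not (v n) (u n) with hn | hn
    · refine ih fun i hi => ?_
      rcases eq_or_ne i n with rfl | hin
      · exact hn.symm
      · exact huv i (by simp [Fin.ext_iff, n] at hin; omega)
    · refine (hflip u).trans (ih fun i hi => ?_)
      rcases eq_or_ne i n with rfl | hin
      · simp [hn]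
      · rw [update_of_ne hin]; exact huv i (by simp [Fin.ext_iff, n] at hin; omega)

lemma reflTransGen_of_forall_flip (u v : Fin l → Bool) : Relation.ReflTransGen R u v :=
  reflTransGen_of_forall_le_eq hR l fun i hi => absurd i.isLt (not_lt.2 hi)

end flip

lemma rel_add_one_of_cycle {X : Type*} {R : X → X → Prop} {n : ℕ} {x : Fin (n + 1) → X}
    (hstep : ∀ i : Fin n, R (x i.castSucc) (x i.succ)) (hlast : R (x (Fin.last n)) (x 0))
    (k : Fin (n + 1)) : R (x k) (x (k + 1)) := by
  induction k using Fin.lastCases with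
  | last => simpa using hlast
  | cast i => simpa [← Fin.coeSucc_eq_succ] using hstep i

lemma apply_add_natCast_eq_of_forall_ne {M ι β : Type*} [AddMonoidWithOne M] {x : M → ι → β}
    {c : M → ι} (hx : ∀ k, ∀ i ≠ c k, x (k + 1) i = x k i) (a : M) (d : ℕ) {i : ι}
    (hi : ∀ e < d, c (a + e) ≠ i) : x (a + d) i = x a i := by
  induction d with
  | zero => simp
  | succ d ih =>
    rw [Nat.cast_succ, ← add_assoc, hx _ _ (hi d d.lt_succ_self).symm]
    exact ih fun e he => hi e (he.trans d.lt_succ_self)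

open Fin.NatCast in
lemma Fin.add_natCast_ne_self {n d : ℕ} (a : Fin (n + 1)) (hd0 : 0 < d) (hdn : d < n + 1) :
    a + d ≠ a := by
  intro h
  have : ((d : ℕ) : Fin (n + 1)) = 0 := by simpa using h
  exact absurd (Nat.le_of_dvd hd0 (Fin.natCast_eq_zero.1 this)) (by omega)

open Fin.NatCast in
lemma acyclic_of_forall_flip {l : ℕ} {S : Set ((Fin l → Bool) × (Fin l → Bool))}
    (hS : ∀ u v, (u, v) ∈ S →
      ∃ n : Fin l, (∀ i < n, u i = (s n).getD i false) ∧ v = update u n (!u n)) :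
    Acyclic S := by
  rintro ⟨n, x, hn, hinj, hstep, hlast⟩
  choose c hpre hx using fun k =>
    hS _ _ (rel_add_one_of_cycle (R := fun a b => (a, b) ∈ S) hstep hlast k)
  have hoff : ∀ k, ∀ i ≠ c k, x (k + 1) i = x k i := fun k i hi => by rw [hx, update_of_ne hi]
  obtain ⟨k₀, -, hmax⟩ := Finset.exists_max_image Finset.univ c ⟨0, Finset.mem_univ _⟩
  set m := c k₀
  have hhigh : ∀ k, ∀ i, m < i → x k i = x 0 i := fun k i hi => by
    simpa using apply_add_natCast_eq_of_forall_ne hoff 0 k.val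
      fun e _ he => (hmax _ (Finset.mem_univ _)).not_gt (he ▸ hi)
  have huniq : ∀ k, c k = m → k = k₀ := by
    intro k hkm
    have hagree : ∀ i ≠ m, x k i = x k₀ i := by
      intro i hi
      rcases lt_or_gt_of_ne hi with hi | hi
      · rw [hpre k i (hkm ▸ hi), hkm, hpre k₀ i hi]
      · rw [hhigh k i hi, hhigh k₀ i hi]
    rcases Bool.eq_or_eq_not (x k m) (x k₀ m) with h | h
    · exact hinj (funext fun i => (eq_or_ne i m).elim (· ▸ h) (hagree i))
    · have hk : k = k₀ + 1 := hinj (by rw [hx, eq_update_iff]; exact ⟨h, hagree⟩)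
      have hk₀ : k + 1 = k₀ := hinj (by rw [hx, hkm, hk, hx]; simp [m])
      refine absurd ?_ (Fin.add_natCast_ne_self k₀ (d := 2) two_pos (by omega))
      rw [Nat.cast_ofNat, ← one_add_one_eq_two, ← add_assoc, ← hk, hk₀]
  have hflip : x (k₀ + 1) m = !x k₀ m := by simp [hx, m]
  have hwrap : k₀ + 1 + (n : Fin (n + 1)) = k₀ := by
    rw [add_assoc, add_comm 1, ← Nat.cast_succ, Fin.natCast_self, add_zero]
  have hconst := apply_add_natCast_eq_of_forall_ne hoff (k₀ + 1) n (i := m) fun e he h =>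
    Fin.add_natCast_ne_self k₀ (d := e + 1) e.succ_pos (by omega)
      (by rw [Nat.cast_succ, add_comm (e : Fin (n + 1)), ← add_assoc]; exact huniq _ h)
  rw [hwrap, hflip] at hconst
  simp at hconst

theorem stmt7_general (s : ℕ → List Bool) (hlen : ∀ n, (s n).length = n)
    (l : ℕ) :
    (∀ u : Fin l → Bool, (u, u) ∉ symRel (Tlevel s l)) ∧
    Acyclic (symRel (Tlevel s l)) ∧ Connected (symRel (Tlevel s l)) := by
  refine ⟨fun u hu => ?_, acyclic_of_forall_flip fun u v => (mem_symRel_Tlevel_iff hlen).1,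
    connected_of_reflTransGen (reflTransGen_of_forall_flip
      fun u n hpre => (mem_symRel_Tlevel_iff hlen).2 ⟨n, hpre, rfl⟩)⟩
  obtain ⟨n, -, h⟩ := (mem_symRel_Tlevel_iff hlen).1 hu
  simpa using congrFun h n

theorem stmt7 (s : ℕ → List Bool) (hlen : ∀ n, (s n).length = n)
    (hdense : ∀ t : List Bool, ∃ n, t <+: s n)
    (l : ℕ) (hl : 1 ≤ l) :
    (∀ u : Fin l → Bool, (u, u) ∉ symRel (Tlevel s l)) ∧
    Acyclic (symRel (Tlevel s l)) ∧ Connected (symRel (Tlevel s l)) :=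
  stmt7_general s hlen l
end

section
/- There exists no Borel countable coloring of (2^ω, 𝔾₀): there is no Borel function c : 2^ω → ω with c(x) ≠ c(y) whenever (x, y) ∈ 𝔾₀. Equivalently, every Baire-measurable 𝔾₀-discrete subset of 2^ω is meager. -/
open Set PiNat

lemma continuous_catSeq (u : List Bool) : Continuous (catSeq u) := by
  apply continuous_pi
  intro k
  unfold catSeq
  by_cases h : k < u.length
  · simp only [h, dif_pos]; exact continuous_const
  · simp only [h, dif_neg, not_false_iff]; exact continuous_apply _

lemma catSeq_cylinder {u : List Bool} {γ₀ : ℕ → Bool} {n : ℕ} {x : ℕ → Bool}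
    (hx : x ∈ cylinder (catSeq u γ₀) (u.length + n)) :
    ∃ γ, γ ∈ cylinder γ₀ n ∧ x = catSeq u γ := by
  refine ⟨fun k => x (k + u.length), ?_, ?_⟩
  · intro i hi
    have h1 := hx (i + u.length) (by omega)
    show x (i + u.length) = γ₀ i
    rw [h1]
    simp only [catSeq]
    rw [dif_neg (by omega)]
    congr 1
    omega
  · funext k
    by_cases h : k < u.length
    · have h1 := hx k (by omega)
      rw [h1]
      simp only [catSeq]
      rw [dif_pos h, dif_pos h]
    · simp only [catSeq]
      rw [dif_neg h]
      congr 1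
      omega

lemma isMeagre_preimage_catSeq {u : List Bool} {M : Set (ℕ → Bool)} (hM : IsMeagre M) :
    IsMeagre (catSeq u ⁻¹' M) := by
  rw [isMeagre_iff_countable_union_isNowhereDense] at hM ⊢
  obtain ⟨S, hS, hc, hsub⟩ := hM
  refine ⟨(fun T => catSeq u ⁻¹' (closure T)) '' S, ?_, hc.image _, ?_⟩
  · rintro _ ⟨T, hT, rfl⟩
    have hcl : IsClosed (catSeq u ⁻¹' closure T) :=
      isClosed_closure.preimage (continuous_catSeq u)
    rw [hcl.isNowhereDense_iff]
    by_contra h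
    obtain ⟨γ₀, hγ₀⟩ := nonempty_iff_ne_empty.mpr h
    obtain ⟨v, ⟨x, n, rfl⟩, hγv, hv⟩ :=
      (isTopologicalBasis_cylinders (fun _ : ℕ => Bool)).exists_subset_of_mem_open hγ₀
        isOpen_interior
    rw [mem_cylinder_iff_eq] at hγv
    rw [← hγv] at hv
    have key : cylinder (catSeq u γ₀) (u.length + n) ⊆ closure T := by
      intro x' hx'
      obtain ⟨γ, hγ, rfl⟩ := catSeq_cylinder hx'
      exact Set.mem_preimage.mp (interior_subset (hv hγ))
    have hnd := (hS T hT)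
    rw [IsNowhereDense] at hnd
    have : catSeq u γ₀ ∈ interior (closure T) :=
      (isOpen_cylinder (fun _ : ℕ => Bool) (catSeq u γ₀) (u.length + n)).subset_interior_iff.mpr
        key (self_mem_cylinder _ _)
    rw [hnd] at this
    exact this
  · intro γ hγ
    obtain ⟨T, hT, hγT⟩ := hsub hγ
    exact ⟨_, ⟨T, hT, rfl⟩, subset_closure hγT⟩

theorem stmt8 (s : ℕ → List Bool) (hlen : ∀ n, (s n).length = n)
    (hdense : ∀ t : List Bool, ∃ n, t <+: s n) :
    (¬ ∃ c : (ℕ → Bool) → ℕ, Measurable c ∧ ∀ p ∈ G0 s, c p.1 ≠ c p.2) ∧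
    (∀ D : Set (ℕ → Bool), BaireMeasurableSet D →
      (∀ p ∈ G0 s, ¬ (p.1 ∈ D ∧ p.2 ∈ D)) → IsMeagre D) := by
  have part2 : ∀ D : Set (ℕ → Bool), BaireMeasurableSet D →
      (∀ p ∈ G0 s, ¬ (p.1 ∈ D ∧ p.2 ∈ D)) → IsMeagre D := by
    intro D hD hdisc
    by_contra hnm
    obtain ⟨U, hUopen, hUeq⟩ := hD.residualEq_isOpen
    rw [Filter.eventuallyEq_set] at hUeq
    have hsd : IsMeagre {x | ¬ (x ∈ D ↔ x ∈ U)} := by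
      rw [IsMeagre]
      have : {x | ¬ (x ∈ D ↔ x ∈ U)}ᶜ = {x | x ∈ D ↔ x ∈ U} := by
        ext z; simp
      rw [this]
      exact hUeq
    -- U is nonempty
    have hUne : U.Nonempty := by
      rcases Set.eq_empty_or_nonempty U with h | h
      · exfalso
        apply hnm
        apply hsd.mono
        intro x hx
        simp [h, hx]
      · exact h
    obtain ⟨x, hx⟩ := hUne
    obtain ⟨v, ⟨y, m, rfl⟩, hxv, hv⟩ :=
      (isTopologicalBasis_cylinders (fun _ : ℕ => Bool)).exists_subset_of_mem_open hx hUopen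
    rw [mem_cylinder_iff_eq] at hxv
    rw [← hxv] at hv
    -- get n with prefix
    obtain ⟨n, hpre⟩ := hdense (List.ofFn (fun i : Fin m => x i))
    have hmn : m ≤ n := by
      have := hpre.length_le
      simp [hlen n] at this
      omega
    -- for b : Bool, the range of catSeq (s n ++ [b]) is inside cylinder x m
    have hrange : ∀ (b : Bool) (γ : ℕ → Bool), catSeq (s n ++ [b]) γ ∈ cylinder x m := by
      intro b γ i hi
      have hilen : i < (s n ++ [b]).length := by
        simp [hlen n]; omega
      have him : i < (List.ofFn (fun i : Fin m => x i)).length := by simpa using hi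
      simp only [catSeq]
      rw [dif_pos hilen]
      have key : (s n ++ [b])[i]'hilen = x i := by
        rw [List.getElem_append_left (by rw [hlen n]; omega), ← hpre.getElem him,
          List.getElem_ofFn]
      exact key
    -- M = set of disagreement, meager; preimages
    have hresid : ∀ b : Bool, (catSeq (s n ++ [b]) ⁻¹' D) ∈ residual (ℕ → Bool) := by
      intro b
      have hsub : (catSeq (s n ++ [b]) ⁻¹' D)ᶜ ⊆
          catSeq (s n ++ [b]) ⁻¹' {x | ¬ (x ∈ D ↔ x ∈ U)} := by
        intro γ hγ
        simp only [mem_compl_iff, mem_preimage] at hγ ⊢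
        intro hiff
        exact hγ (hiff.mpr (hv (hrange b γ)))
      have : IsMeagre ((catSeq (s n ++ [b]) ⁻¹' D)ᶜ) :=
        (isMeagre_preimage_catSeq hsd).mono hsub
      rwa [IsMeagre, compl_compl] at this
    have hne : ((catSeq (s n ++ [false]) ⁻¹' D) ∩ (catSeq (s n ++ [true]) ⁻¹' D)).Nonempty := by
      have hmem := Filter.inter_mem (hresid false) (hresid true)
      exact (dense_of_mem_residual hmem).nonempty
    obtain ⟨γ, hγ0, hγ1⟩ := hne
    exact hdisc (catSeq (s n ++ [false]) γ, catSeq (s n ++ [true]) γ) ⟨n, γ, rfl⟩ ⟨hγ0, hγ1⟩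
  refine ⟨?_, part2⟩
  rintro ⟨c, hc, hcol⟩
  have hmeag : ∀ i : ℕ, IsMeagre (c ⁻¹' {i}) := by
    intro i
    apply part2
    · exact (hc (measurableSet_singleton i)).baireMeasurableSet
    · rintro p hp ⟨h1, h2⟩
      exact hcol p hp (h1.trans h2.symm)
  have huniv : IsMeagre (univ : Set (ℕ → Bool)) := by
    have : (⋃ i : ℕ, c ⁻¹' {i}) = univ := by
      ext x; simp
    rw [← this]
    exact isMeagre_iUnion hmeag
  rw [IsMeagre, compl_univ] at huniv
  have := (dense_of_mem_residual huniv).nonempty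
  simp at this
end

section
/- Every relation G on a Polish space X that is potentially in the class of complements of differences of two open sets (pot(Ď₂(Σ⁰₁))) and whose bipartite symmetrization s(G_A) is acyclic, is potentially closed (pot(Π⁰₁)). In particular, writing G = O ∪ C with O pot(Σ⁰₁) and C pot(Π⁰₁): the set O ∖ Δ(X), being a pot(Σ⁰₁) irreflexive relation with acyclic bipartite symmetrization, is a countable union of Borel rectangles A_n × B_n with A_n or B_n countable, hence pot(Δ⁰₁); and O ∩ Δ(X), a Borel set with closed vertical sections, is pot(Π⁰₁); therefore G is pot(Π⁰₁). -/
open Set Topology PolishSpace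

theorem Acyclic.subsingleton_or_subsingleton_of_prod_subset {X : Type*} {G : Set (X × X)}
    (hac : Acyclic (symRel (BipGraph G))) {P Q : Set X} (h : P ×ˢ Q ⊆ G) :
    P.Subsingleton ∨ Q.Subsingleton := by
  by_contra! ⟨⟨a, ha, a', ha', haa'⟩, ⟨b, hb, b', hb', hbb'⟩⟩
  refine hac ⟨3, ![(false, a), (true, b), (false, a'), (true, b')], by norm_num, ?_, ?_, ?_⟩
  · intro i j hij
    fin_cases i <;> fin_cases j <;> simp_all
  · intro i
    fin_cases i
    · exact Or.inl ⟨rfl, rfl, h ⟨ha, hb⟩⟩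
    · exact Or.inr ⟨rfl, rfl, h ⟨ha', hb⟩⟩
    · exact Or.inl ⟨rfl, rfl, h ⟨ha', hb'⟩⟩
  · exact Or.inr ⟨rfl, rfl, h ⟨ha, hb'⟩⟩

theorem countable_setOf_isOpen_singleton {X : Type*} [TopologicalSpace X]
    [SecondCountableTopology X] : {x : X | IsOpen {x}}.Countable := by
  refine (HereditarilyLindelofSpace.isLindelof _).countable ?_
  refine discreteTopology_subtype_iff'.2 fun x hx => ⟨{x}, hx, ?_⟩
  exact inter_eq_left.2 (singleton_subset_iff.2 hx)

section Rectangles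

variable {X Y : Type*} [TopologicalSpace X] [TopologicalSpace Y] {V : Set (X × Y)}

theorem IsOpen.subset_isolated_prod_univ_union_univ_prod_isolated (hV : IsOpen V)
    (hrect : ∀ (P : Set X) (Q : Set Y), P ×ˢ Q ⊆ V → P.Subsingleton ∨ Q.Subsingleton) :
    V ⊆ {x | IsOpen {x}} ×ˢ univ ∪ univ ×ˢ {y | IsOpen {y}} := by
  rintro ⟨x, y⟩ hxy
  obtain ⟨P, Q, hP, hQ, hx, hy, hPQ⟩ := isOpen_prod_iff.1 hV x y hxy
  rcases hrect P Q hPQ with hP1 | hQ1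
  · exact Or.inl ⟨show IsOpen {x} from hP1.eq_singleton_of_mem hx ▸ hP, trivial⟩
  · exact Or.inr ⟨trivial, show IsOpen {y} from hQ1.eq_singleton_of_mem hy ▸ hQ⟩

theorem isClosed_of_subset_prod_univ_union_univ_prod {A : Set X} {B : Set Y}
    (hVAB : V ⊆ A ×ˢ univ ∪ univ ×ˢ B) (hA : IsClosed A) (hB : IsClosed B)
    (hAo : ∀ x ∈ A, IsOpen {x}) (hBo : ∀ y ∈ B, IsOpen {y})
    (hVA : ∀ x ∈ A, IsClosed {y | (x, y) ∈ V}) (hVB : ∀ y ∈ B, IsClosed {x | (x, y) ∈ V}) :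
    IsClosed V := by
  rw [← isOpen_compl_iff, isOpen_prod_iff]
  intro x y hxy
  by_cases hx : x ∈ A
  · refine ⟨{x}, {y | (x, y) ∈ V}ᶜ, hAo x hx, (hVA x hx).isOpen_compl, rfl, hxy, ?_⟩
    rintro ⟨x', y'⟩ ⟨rfl, hy'⟩
    exact hy'
  by_cases hy : y ∈ B
  · refine ⟨{x | (x, y) ∈ V}ᶜ, {y}, (hVB y hy).isOpen_compl, hBo y hy, hxy, rfl, ?_⟩
    rintro ⟨x', y'⟩ ⟨hx', rfl⟩
    exact hx'
  refine ⟨Aᶜ, Bᶜ, hA.isOpen_compl, hB.isOpen_compl, hx, hy, ?_⟩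
  rintro ⟨x', y'⟩ ⟨hx', hy'⟩ hV
  rcases hVAB hV with h | h
  exacts [hx' h.1, hy' h.2]

end Rectangles

theorem PolishSpace.exists_le_forall_isClosed_isOpen {X : Type*} [t : TopologicalSpace X]
    [PolishSpace X] {S : Set (Set X)} (hS : S.Countable) (h : ∀ s ∈ S, IsClopenable s) :
    ∃ t' ≤ t, @PolishSpace X t' ∧ ∀ s ∈ S, IsClosed[t'] s ∧ IsOpen[t'] s := by
  have := hS.to_subtype
  choose m hmt hm hcl hop using fun s : S => h s s.2
  obtain ⟨t', ht'm, ht't, ht'⟩ := exists_polishSpace_forall_le m hmt hm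
  exact ⟨t', ht't, ht', fun s hs =>
    ⟨(hcl ⟨s, hs⟩).mono (ht'm _), (hop ⟨s, hs⟩).mono (ht'm _)⟩⟩


theorem IsOpen.exists_polishSpace_le_isClosed {X : Type*} [t : TopologicalSpace X] [PolishSpace X]
    {V : Set (X × X)} (hV : IsOpen V)
    (hrect : ∀ P Q : Set X, P ×ˢ Q ⊆ V → P.Subsingleton ∨ Q.Subsingleton) :
    ∃ t' ≤ t, @PolishSpace X t' ∧ IsClosed[@instTopologicalSpaceProd X X t' t'] V := by
  set I := {x : X | IsOpen {x}}
  -- before `obtain` below adds `t'` as a local instance, which would then shadow `t`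
  have hcover := hV.subset_isolated_prod_univ_union_univ_prod_isolated hrect
  have hI : I.Countable := countable_setOf_isOpen_singleton
  set S : Set (Set X) :=
    insert I ((fun x => {y | (x, y) ∈ V}) '' I ∪ (fun y => {x | (x, y) ∈ V}) '' I)
  have hS : S.Countable := ((hI.image _).union (hI.image _)).insert I
  have hS_clopenable : ∀ s ∈ S, IsClopenable s := by
    let := borel X
    have : BorelSpace X := ⟨rfl⟩
    rintro s (rfl | ⟨x, -, rfl⟩ | ⟨y, -, rfl⟩)
    · exact hI.measurableSet.isClopenable
    · exact (hV.preimage (Continuous.prodMk_right x)).isClopenable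
    · exact (hV.preimage (Continuous.prodMk_left y)).isClopenable
  obtain ⟨t', ht't, ht', hS'⟩ := exists_le_forall_isClosed_isOpen hS hS_clopenable
  have hI' : IsClosed[t'] I := (hS' I (mem_insert _ _)).1
  have hI_isolated : ∀ x ∈ I, IsOpen[t'] {x} := fun _ hx => hx.mono ht't
  refine ⟨t', ht't, ht', ?_⟩
  exact @isClosed_of_subset_prod_univ_union_univ_prod X X t' t' V I I
    hcover hI' hI' hI_isolated hI_isolated
    (fun x hx => (hS' _ (Or.inr (Or.inl ⟨x, hx, rfl⟩))).1)
    (fun y hy => (hS' _ (Or.inr (Or.inr ⟨y, hy, rfl⟩))).1)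

theorem stmt18_general (X : Type) (t : TopologicalSpace X)
    (G : Set (X × X))
    (hac : Acyclic (symRel (BipGraph G)))
    -- `G` is potentially `Ď₂(Σ⁰₁)`: for some finer Polish topology, the complement of `G`
    -- is the difference of two open sets in the square.
    (hpot : ∃ t' : TopologicalSpace X, t' ≤ t ∧ @PolishSpace X t' ∧
      ∃ U V : Set (X × X),
        @IsOpen _ (@instTopologicalSpaceProd X X t' t') U ∧
        @IsOpen _ (@instTopologicalSpaceProd X X t' t') V ∧ Gᶜ = U \ V) :
    -- `G` is potentially closed.
    ∃ t' : TopologicalSpace X, t' ≤ t ∧ @PolishSpace X t' ∧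
      @IsClosed _ (@instTopologicalSpaceProd X X t' t') G := by
  obtain ⟨t', ht't, ht', U, V, hU, hV, hGc⟩ := hpot
  have hG : G = Uᶜ ∪ V := by rw [← compl_compl G, hGc, sdiff_eq, compl_inter, compl_compl]
  have hVG : V ⊆ G := hG ▸ subset_union_right
  obtain ⟨t'', ht''t', ht'', hV''⟩ := @IsOpen.exists_polishSpace_le_isClosed X t' ht' V hV
    fun P Q hPQ => hac.subsingleton_or_subsingleton_of_prod_subset (hPQ.trans hVG)
  have hU'' : IsOpen[@instTopologicalSpaceProd X X t'' t''] U :=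
    hU.mono (TopologicalSpace.prod_mono ht''t' ht''t')
  exact ⟨t'', ht''t'.trans ht't, ht'', hG ▸ hU''.isClosed_compl.union hV''⟩

theorem stmt18 (X : Type) (t : TopologicalSpace X) (hX : @PolishSpace X t)
    (G : Set (X × X))
    (hac : Acyclic (symRel (BipGraph G)))
    -- `G` is potentially `Ď₂(Σ⁰₁)`: for some finer Polish topology, the complement of `G`
    -- is the difference of two open sets in the square.
    (hpot : ∃ t' : TopologicalSpace X, t' ≤ t ∧ @PolishSpace X t' ∧
      ∃ U V : Set (X × X),
        @IsOpen _ (@instTopologicalSpaceProd X X t' t') U ∧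
        @IsOpen _ (@instTopologicalSpaceProd X X t' t') V ∧ Gᶜ = U \ V) :
    -- `G` is potentially closed.
    ∃ t' : TopologicalSpace X, t' ≤ t ∧ @PolishSpace X t' ∧
      @IsClosed _ (@instTopologicalSpaceProd X X t' t') G :=
  stmt18_general X t G hac hpot
end
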